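/- The number of subgroups of index d in ℤ × ℤ equals σ(d) = ∑_{k | d} k, the sum of the divisors of d. -/

import Mathlib

/-!
A subgroup `H ≤ ℤ²` of finite index has a unique basis in Hermite normal form `(a, 0), (b, c)`
with `0 ≤ b < a`: here `aℤ = {x | (x, 0) ∈ H}` and `cℤ` is the projection of `H` to the second
factor, and `[ℤ² : H] = a c`. So the subgroups of index `d` correspond to the pairs `a c = d`
together with a residue `b` modulo `a`, and there are `∑_{a ∣ d} a` of them.
-/

open AddSubgroup

theorem AddSubgroup.eq_of_le_of_index_eq {G : Type*} [AddGroup G] {H K : AddSubgroup G}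
    (hle : K ≤ H) (hindex : K.index = H.index) (hH : H.index ≠ 0) : K = H := by
  have : K.relIndex H = 1 := by
    have := relIndex_mul_index hle
    rw [hindex] at this
    exact (Nat.mul_eq_right hH).mp this
  exact le_antisymm hle (relIndex_eq_one.mp this)

theorem AddSubgroup.index_eq_index_comap_inl_mul_index_map_snd {G G' : Type*} [AddCommGroup G]
    [AddCommGroup G'] (H : AddSubgroup (G × G')) :
    H.index = (H.comap (AddMonoidHom.inl G G')).index * (H.map (AddMonoidHom.snd G G')).index := by
  have hrange : (AddMonoidHom.inl G G').range = (AddMonoidHom.snd G G').ker := by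
    ext ⟨x, y⟩
    simp [eq_comm, mem_prod]
  -- `[G × G' : H] = [G × G' : H ⊔ N] [H ⊔ N : H]` with `N = G × 0`, and `[H ⊔ N : H] = [N : H ⊓ N]`
  -- because `H` is normal.
  rw [index_comap, index_map,
    (AddMonoidHom.snd G G').range_eq_top_of_surjective Prod.snd_surjective, index_top, mul_one,
    hrange, ← relIndex_sup_right, sup_comm, relIndex_mul_index le_sup_left]

def hnfLattice (a : ℕ) (b : ℤ) (c : ℕ) : AddSubgroup (ℤ × ℤ) :=
  zmultiples ((a : ℤ), 0) ⊔ zmultiples (b, (c : ℤ))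

lemma mem_hnfLattice {a c : ℕ} {b : ℤ} {p : ℤ × ℤ} :
    p ∈ hnfLattice a b c ↔ ∃ m n : ℤ, (m * a + n * b, n * c) = p := by
  simp [hnfLattice, mem_sup, mem_zmultiples_iff, Prod.ext_iff]

lemma comap_inl_hnfLattice {a c : ℕ} (b : ℤ) (hc : c ≠ 0) :
    (hnfLattice a b c).comap (AddMonoidHom.inl ℤ ℤ) = zmultiples (a : ℤ) := by
  ext x
  simp [mem_hnfLattice, mem_zmultiples_iff, hc, eq_comm]

lemma map_snd_hnfLattice (a c : ℕ) (b : ℤ) :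
    (hnfLattice a b c).map (AddMonoidHom.snd ℤ ℤ) = zmultiples (c : ℤ) := by
  ext y
  simp [mem_hnfLattice, mem_zmultiples_iff]

lemma index_hnfLattice {a c : ℕ} (b : ℤ) (hc : c ≠ 0) : (hnfLattice a b c).index = a * c := by
  rw [index_eq_index_comap_inl_mul_index_map_snd, comap_inl_hnfLattice b hc, map_snd_hnfLattice,
    Int.index_zmultiples, Int.index_zmultiples, Int.natAbs_natCast, Int.natAbs_natCast]

lemma eq_and_modEq_of_hnfLattice_eq {a a' c c' : ℕ} {b b' : ℤ} (hc : c ≠ 0) (hc' : c' ≠ 0)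
    (h : hnfLattice a b c = hnfLattice a' b' c') : a = a' ∧ c = c' ∧ b ≡ b' [ZMOD a] := by
  obtain rfl : a = a' := by
    simpa [comap_inl_hnfLattice _ hc, comap_inl_hnfLattice _ hc', Int.index_zmultiples] using
      congrArg (fun L ↦ (L.comap (AddMonoidHom.inl ℤ ℤ)).index) h
  obtain rfl : c = c' := by
    simpa [map_snd_hnfLattice, Int.index_zmultiples] using
      congrArg (fun L ↦ (L.map (AddMonoidHom.snd ℤ ℤ)).index) h
  have hmem : (b', (c : ℤ)) ∈ hnfLattice a b c := h ▸ mem_hnfLattice.mpr ⟨0, 1, by simp⟩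
  obtain ⟨m, n, hm, hn⟩ : ∃ m n : ℤ, m * a + n * b = b' ∧ n * c = c := by
    simpa [Prod.ext_iff] using mem_hnfLattice.mp hmem
  obtain rfl : n = 1 := by simpa [hc] using hn
  exact ⟨rfl, rfl, Int.modEq_iff_dvd.mpr ⟨m, by linarith⟩⟩

lemma exists_hnfLattice_eq (H : AddSubgroup (ℤ × ℤ)) (hH : H.index ≠ 0) :
    ∃ b : Fin (H.comap (AddMonoidHom.inl ℤ ℤ)).index,
      hnfLattice (H.comap (AddMonoidHom.inl ℤ ℤ)).index b
        (H.map (AddMonoidHom.snd ℤ ℤ)).index = H := by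
  set a := (H.comap (AddMonoidHom.inl ℤ ℤ)).index
  set c := (H.map (AddMonoidHom.snd ℤ ℤ)).index
  have hac : a * c = H.index := (index_eq_index_comap_inl_mul_index_map_snd H).symm
  have ha : 0 < a := Nat.pos_of_ne_zero (left_ne_zero_of_mul (hac ▸ hH))
  have hc : c ≠ 0 := right_ne_zero_of_mul (hac ▸ hH)
  have ha_mem : ((a : ℤ), (0 : ℤ)) ∈ H := by
    simpa using nsmul_index_mem (H.comap (AddMonoidHom.inl ℤ ℤ)) 1
  have hc_mem : (c : ℤ) ∈ H.map (AddMonoidHom.snd ℤ ℤ) := by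
    simpa using nsmul_index_mem (H.map (AddMonoidHom.snd ℤ ℤ)) 1
  obtain ⟨⟨b₀, y⟩, hb₀, rfl : y = c⟩ := hc_mem
  have hb_nonneg : 0 ≤ b₀ % a := Int.emod_nonneg _ (by omega)
  have hb_lt : b₀ % a < a := Int.emod_lt_of_pos _ (by omega)
  refine ⟨⟨(b₀ % a).toNat, by omega⟩, eq_of_le_of_index_eq ?_ ?_ hH⟩
  · rw [Int.toNat_of_nonneg hb_nonneg]
    have hbc : (b₀ % a, (c : ℤ)) = (b₀, (c : ℤ)) - (b₀ / a) • ((a : ℤ), (0 : ℤ)) := by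
      ext <;> simp [Int.emod_def, mul_comm]
    refine sup_le (zmultiples_le.mpr ha_mem) (zmultiples_le.mpr ?_)
    rw [hbc]
    exact sub_mem hb₀ (zsmul_mem ha_mem _)
  · rw [index_hnfLattice _ hc, hac]

def hnfLatticeOfIndex (d : ℕ) (x : Σ p : d.divisorsAntidiagonal, Fin p.1.1) :
    {H : AddSubgroup (ℤ × ℤ) // H.index = d} :=
  ⟨hnfLattice x.1.1.1 x.2 x.1.1.2, by
    rw [index_hnfLattice _ (Nat.right_ne_zero_of_mem_divisorsAntidiagonal x.1.2)]
    exact (Nat.mem_divisorsAntidiagonal.mp x.1.2).1⟩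

lemma hnfLatticeOfIndex_bijective {d : ℕ} (hd : d ≠ 0) : (hnfLatticeOfIndex d).Bijective := by
  refine ⟨?_, ?_⟩
  · rintro ⟨⟨⟨a, c⟩, hac⟩, b⟩ ⟨⟨⟨a', c'⟩, hac'⟩, b'⟩ h
    obtain ⟨rfl, rfl, hb⟩ := eq_and_modEq_of_hnfLattice_eq
      (Nat.right_ne_zero_of_mem_divisorsAntidiagonal hac)
      (Nat.right_ne_zero_of_mem_divisorsAntidiagonal hac') (congrArg Subtype.val h)
    obtain rfl : b = b' := Fin.ext ((Int.natCast_modEq_iff.mp hb).eq_of_lt_of_lt b.2 b'.2)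
    rfl
  · rintro ⟨H, hH⟩
    obtain ⟨b, hb⟩ := exists_hnfLattice_eq H (hH ▸ hd)
    have hmem : ((H.comap (AddMonoidHom.inl ℤ ℤ)).index, (H.map (AddMonoidHom.snd ℤ ℤ)).index) ∈
        d.divisorsAntidiagonal :=
      Nat.mem_divisorsAntidiagonal.mpr
        ⟨hH ▸ (index_eq_index_comap_inl_mul_index_map_snd H).symm, hd⟩
    exact ⟨⟨⟨_, hmem⟩, b⟩, Subtype.ext hb⟩

/-- The number of subgroups of index `d` in `ℤ × ℤ` is `σ(d) = ∑_{k ∣ d} k`. -/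
theorem card_index_d_sublattices (d : ℕ) (hd : 0 < d) :
    Nat.card {H : AddSubgroup (ℤ × ℤ) // H.index = d} = ∑ k ∈ d.divisors, k := by
  rw [← Nat.card_congr (Equiv.ofBijective _ (hnfLatticeOfIndex_bijective hd.ne')), Nat.card_sigma]
  simp only [Nat.card_eq_fintype_card, Fintype.card_fin]
  rw [Finset.sum_coe_sort d.divisorsAntidiagonal (fun p ↦ p.1),
    Nat.sum_divisorsAntidiagonal (fun a _ ↦ a)]
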